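/- For every n ≥ 1, every A ∈ M₂(ℂ)^{⊗n}, and each 1 ≤ j ≤ n, one has d_j(A)*A + A*d_j(A) − d_j(A*A) ≥ d_j(A)*d_j(A) in the Loewner (positive semidefinite) order; consequently, 2Γ(A) ≥ ∑_{j=1}^n d_j(A)*d_j(A). -/

import Mathlib

open Matrix
open scoped BigOperators Classical ComplexOrder

namespace QPaper

variable {ι : Type*} [Fintype ι] [DecidableEq ι]

/-- The positive semidefinite square root of a matrix (junk value `0` if the matrix is
not positive semidefinite). -/
noncomputable def psdSqrt (X : Matrix ι ι ℂ) : Matrix ι ι ℂ :=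
  if h : X.PosSemidef then
    (h.1.eigenvectorUnitary : Matrix ι ι ℂ) * diagonal ((↑) ∘ Real.sqrt ∘ h.1.eigenvalues) *
      (star (h.1.eigenvectorUnitary : Matrix ι ι ℂ))
  else 0

/-- The normalized trace (Schatten 1) norm `‖X‖₁ = tr |X| / card ι`. -/
noncomputable def normOne (X : Matrix ι ι ℂ) : ℝ :=
  (psdSqrt (Xᴴ * X)).trace.re / Fintype.card ι

/-- The normalized Schatten 2 norm `‖X‖₂ = (tr (X* X) / card ι)^{1/2}`. -/
noncomputable def normTwo (X : Matrix ι ι ℂ) : ℝ :=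
  Real.sqrt ((Xᴴ * X).trace.re / Fintype.card ι)

/-- The operator norm of a matrix, acting on the Euclidean space. -/
noncomputable def opNorm (X : Matrix ι ι ℂ) : ℝ :=
  ‖Matrix.toEuclideanCLM (𝕜 := ℂ) X‖

/-- The Loewner order: `X ≤ Y` iff `Y - X` is positive semidefinite. -/
def LoewnerLE (X Y : Matrix ι ι ℂ) : Prop := (Y - X).PosSemidef

/-- Configurations of `n` qubits. -/
abbrev QState (n : ℕ) := Fin n → Fin 2

/-- The algebra of `n`-qubit observables `M₂(ℂ)^{⊗ n}`. -/
abbrev Obs (n : ℕ) := Matrix (QState n) (QState n) ℂ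

/-- The conditional expectation `E_S = ⊗_{j ∈ S} (½ tr)(·) 𝟏 ⊗ id` replacing each qubit in `S`
by its normalized partial trace:  `E_S(A) = 2^{-|S|} tr_S(A) ⊗ 𝟏_S`. -/
noncomputable def ESet {n : ℕ} (S : Finset (Fin n)) (A : Obs n) : Obs n :=
  Matrix.of fun x y =>
    if ∀ j ∈ S, x j = y j then
      ((2 : ℂ) ^ n)⁻¹ *
        ∑ z : QState n,
          A (fun j => if j ∈ S then z j else x j) (fun j => if j ∈ S then z j else y j)
    else 0

/-- The derivation `d_j = 𝕀^{⊗(j-1)} ⊗ (𝕀 - ½ tr(·) 𝟏) ⊗ 𝕀^{⊗(n-j)}`. -/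
noncomputable def dCoord {n : ℕ} (j : Fin n) (A : Obs n) : Obs n := A - ESet {j} A

/-- The quantum depolarizing semigroup `P_t = (e^{-t} 𝕀 + (1 - e^{-t}) ½ tr(·) 𝟏)^{⊗ n}`. -/
noncomputable def Pt {n : ℕ} (t : ℝ) (A : Obs n) : Obs n :=
  ∑ S : Finset (Fin n),
    (Real.exp (-t) ^ (n - S.card) * (1 - Real.exp (-t)) ^ S.card) • ESet S A

/-- The generator `𝓛 = ∑_j d_j`. -/
noncomputable def Lgen {n : ℕ} (A : Obs n) : Obs n := ∑ j : Fin n, dCoord j A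

/-- The carré du champ `Γ(A) = ½ (𝓛(A*) A + A* 𝓛(A) - 𝓛(A* A))`. -/
noncomputable def carre {n : ℕ} (A : Obs n) : Obs n :=
  (2 : ℂ)⁻¹ • (Lgen Aᴴ * A + Aᴴ * Lgen A - Lgen (Aᴴ * A))

/-- The total `L¹`-influence `Inf¹(A) = ∑_j ‖d_j A‖₁`. -/
noncomputable def inf1 {n : ℕ} (A : Obs n) : ℝ := ∑ j : Fin n, normOne (dCoord j A)

/-- The total `L²`-influence `Inf²(A) = ∑_j ‖d_j A‖₂²`. -/
noncomputable def inf2 {n : ℕ} (A : Obs n) : ℝ := ∑ j : Fin n, normTwo (dCoord j A) ^ 2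

/-- The mean part `2^{-n} tr(A) 𝟏`. -/
noncomputable def meanPart {n : ℕ} (A : Obs n) : Obs n :=
  (A.trace / (2 : ℂ) ^ n) • (1 : Obs n)

/-- The variance `Var(A) = ‖A - 2^{-n} tr(A) 𝟏‖₂²`. -/
noncomputable def Var {n : ℕ} (A : Obs n) : ℝ := normTwo (A - meanPart A) ^ 2



section AuxLemmas

namespace Aux

lemma psd_sum {ι : Type*} [Fintype ι] {κ : Type*} (s : Finset κ) (f : κ → Matrix ι ι ℂ)
    (h : ∀ i ∈ s, (f i).PosSemidef) : (∑ i ∈ s, f i).PosSemidef :=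
  Finset.sum_induction f _ (fun _ _ ha hb => ha.add hb) .zero h

lemma psd_smul {ι : Type*} [Fintype ι] {M : Matrix ι ι ℂ} (h : M.PosSemidef) {c : ℂ}
    (hc : 0 ≤ c) : (c • M).PosSemidef := by
  have him : c.im = 0 := by
    rw [Complex.le_def] at hc
    exact hc.2.symm
  have hstar : star c = c := by
    apply Complex.ext <;> simp [him]
  constructor
  · unfold Matrix.IsHermitian
    rw [conjTranspose_smul, hstar, h.1.eq]
  · intro x
    exact (h.smul hc).2 x

variable {n : ℕ}

/-- Flip the `j`-th qubit by `a`. -/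
def flipQ (j : Fin n) (a : Fin 2) (x : QState n) : QState n :=
  fun k => if k = j then x k + a else x k

lemma flipQ_flipQ (j : Fin n) (a : Fin 2) (x : QState n) : flipQ j a (flipQ j a x) = x := by
  funext k
  simp only [flipQ]
  split_ifs with h
  · have : a + a = 0 := by fin_cases a <;> decide
    rw [add_assoc, this, add_zero]
  · rfl

lemma flipQ_bijective (j : Fin n) (a : Fin 2) : Function.Bijective (flipQ j a) :=
  Function.Involutive.bijective (flipQ_flipQ j a)

/-- The sign `(-1)^{b ⋅ c}`. -/
def sgn (b c : Fin 2) : ℂ := if b = 1 ∧ c = 1 then -1 else 1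

lemma sgn_mul_self (b c : Fin 2) : sgn b c * sgn b c = 1 := by
  fin_cases b <;> fin_cases c <;> norm_num [sgn]

lemma star_sgn (b c : Fin 2) : star (sgn b c) = sgn b c := by
  fin_cases b <;> fin_cases c <;> simp [sgn]

lemma sum_sgn (c d : Fin 2) : ∑ b : Fin 2, sgn b c * sgn b d = if c = d then 2 else 0 := by
  fin_cases c <;> fin_cases d <;> norm_num [sgn, Fin.sum_univ_two]

/-- Conjugation by the Pauli unitary `X^{u.1} Z^{u.2}` on qubit `j`. -/
noncomputable def Tc (j : Fin n) (u : Fin 2 × Fin 2) (A : Obs n) : Obs n :=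
  Matrix.of fun x y => sgn u.2 (x j) * sgn u.2 (y j) * A (flipQ j u.1 x) (flipQ j u.1 y)

lemma Tc_conjTranspose (j : Fin n) (u : Fin 2 × Fin 2) (A : Obs n) :
    (Tc j u A)ᴴ = Tc j u Aᴴ := by
  ext x y
  simp only [Tc, conjTranspose_apply, Matrix.of_apply, star_mul', star_sgn]
  ring

lemma Tc_mul (j : Fin n) (u : Fin 2 × Fin 2) (A B : Obs n) :
    Tc j u (A * B) = Tc j u A * Tc j u B := by
  ext x y
  simp only [Tc, Matrix.of_apply, Matrix.mul_apply]
  have : ∀ z : QState n,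
      (sgn u.2 (x j) * sgn u.2 (z j) * A (flipQ j u.1 x) (flipQ j u.1 z)) *
        (sgn u.2 (z j) * sgn u.2 (y j) * B (flipQ j u.1 z) (flipQ j u.1 y))
      = sgn u.2 (x j) * sgn u.2 (y j) *
          (A (flipQ j u.1 x) (flipQ j u.1 z) * B (flipQ j u.1 z) (flipQ j u.1 y)) := by
    intro z
    calc (sgn u.2 (x j) * sgn u.2 (z j) * A (flipQ j u.1 x) (flipQ j u.1 z)) *
        (sgn u.2 (z j) * sgn u.2 (y j) * B (flipQ j u.1 z) (flipQ j u.1 y))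
        = (sgn u.2 (z j) * sgn u.2 (z j)) * (sgn u.2 (x j) * sgn u.2 (y j) *
            (A (flipQ j u.1 x) (flipQ j u.1 z) * B (flipQ j u.1 z) (flipQ j u.1 y))) := by ring
      _ = _ := by rw [sgn_mul_self, one_mul]
  rw [Finset.sum_congr rfl fun z _ => this z, ← Finset.mul_sum]
  congr 1
  exact ((flipQ_bijective j u.1).sum_comp fun w => A (flipQ j u.1 x) w * B w (flipQ j u.1 y)).symm

/-- Update position `j` to value `c`. -/
def updQ (j : Fin n) (x : QState n) (c : Fin 2) : QState n :=
  fun k => if k = j then c else x k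

lemma ESet_singleton_eq (hn : 1 ≤ n) (j : Fin n) (A : Obs n) :
    ESet {j} A = (4 : ℂ)⁻¹ • ∑ u : Fin 2 × Fin 2, Tc j u A := by
  obtain ⟨m, rfl⟩ : ∃ m, n = m + 1 := ⟨n - 1, (Nat.succ_pred_eq_of_pos hn).symm⟩
  ext x y
  have hcard : Fintype.card {k : Fin (m+1) // k ≠ j} = m := by
    rw [Fintype.card_subtype_compl]
    simp
  have hR : ∑ u : Fin 2 × Fin 2, sgn u.2 (x j) * sgn u.2 (y j) *
        A (flipQ j u.1 x) (flipQ j u.1 y)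
      = (if x j = y j then (2:ℂ) else 0) * ∑ a : Fin 2, A (flipQ j a x) (flipQ j a y) := by
    rw [Fintype.sum_prod_type, Finset.mul_sum]
    refine Finset.sum_congr rfl fun a _ => ?_
    show ∑ b : Fin 2, sgn b (x j) * sgn b (y j) * A (flipQ j a x) (flipQ j a y) = _
    rw [← Finset.sum_mul, sum_sgn]
  have hRHS : ((4 : ℂ)⁻¹ • ∑ u : Fin 2 × Fin 2, Tc j u A) x y
      = (4 : ℂ)⁻¹ * ((if x j = y j then (2:ℂ) else 0) *
          ∑ a : Fin 2, A (flipQ j a x) (flipQ j a y)) := by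
    simp only [Matrix.smul_apply, Matrix.sum_apply, Tc, Matrix.of_apply, smul_eq_mul]
    rw [hR]
  rw [hRHS]
  by_cases h : x j = y j
  · have hz : ∀ (w : QState (m+1)) (z : QState (m+1)),
        (fun k => if k = j then z k else w k) = updQ j w (z j) := by
      intro w z; funext k
      simp only [updQ]
      by_cases hk : k = j
      · subst hk; simp
      · simp [hk]
    have hL : ESet {j} A x y = ((2:ℂ)^(m+1))⁻¹ *
        ∑ z : QState (m+1), A (updQ j x (z j)) (updQ j y (z j)) := by
      simp only [ESet, Matrix.of_apply, Finset.mem_singleton, forall_eq, if_pos h]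
      congr 1
      exact Finset.sum_congr rfl fun z _ => by rw [hz x z, hz y z]
    have hsum : ∀ g : Fin 2 → ℂ, ∑ z : QState (m+1), g (z j) = (2:ℂ)^m * ∑ c : Fin 2, g c := by
      intro g
      calc ∑ z : QState (m+1), g (z j)
          = ∑ p : Fin 2 × ({k : Fin (m+1) // k ≠ j} → Fin 2), g p.1 :=
            Fintype.sum_equiv (Equiv.funSplitAt j (Fin 2)) _ _ (fun z => rfl)
        _ = ∑ c : Fin 2, (Fintype.card ({k : Fin (m+1) // k ≠ j} → Fin 2)) • g c := by
            rw [Fintype.sum_prod_type]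
            refine Finset.sum_congr rfl fun c _ => ?_
            show ∑ _h : {k : Fin (m+1) // k ≠ j} → Fin 2, g c = _
            rw [Finset.sum_const, Finset.card_univ]
        _ = (2:ℂ)^m * ∑ c : Fin 2, g c := by
            rw [Finset.mul_sum]
            refine Finset.sum_congr rfl fun c _ => ?_
            rw [Fintype.card_fun, hcard, Fintype.card_fin, nsmul_eq_mul]
            push_cast
            ring
    have hC : ∑ a : Fin 2, A (flipQ j a x) (flipQ j a y)
        = ∑ c : Fin 2, A (updQ j x c) (updQ j y c) := by
      refine Fintype.sum_equiv (Equiv.addLeft (x j)) _ _ fun a => ?_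
      have h1 : flipQ j a x = updQ j x (x j + a) := by
        funext k
        simp only [flipQ, updQ]
        by_cases hk : k = j
        · subst hk; simp
        · simp [hk]
      have h2 : flipQ j a y = updQ j y (x j + a) := by
        funext k
        simp only [flipQ, updQ]
        by_cases hk : k = j
        · subst hk; simp [h]
        · simp [hk]
      rw [h1, h2]
      rfl
    rw [hL, hsum (fun c => A (updQ j x c) (updQ j y c)), hC, if_pos h]
    have h2 : (2:ℂ)^m ≠ 0 := pow_ne_zero _ two_ne_zero
    rw [pow_succ]
    field_simp
    ring
  · simp only [ESet, Matrix.of_apply, Finset.mem_singleton, forall_eq, if_neg h]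
    simp

lemma kadison {n : ℕ} (hn : 1 ≤ n) (j : Fin n) (A : Obs n) :
    (ESet {j} (Aᴴ * A) - (ESet {j} A)ᴴ * ESet {j} A).PosSemidef := by
  set B : Fin 2 × Fin 2 → Obs n := fun u => Tc j u A with hB
  have hE : ESet {j} A = (4:ℂ)⁻¹ • ∑ u : Fin 2 × Fin 2, B u := ESet_singleton_eq hn j A
  have hE2 : ESet {j} (Aᴴ * A) = (4:ℂ)⁻¹ • ∑ u : Fin 2 × Fin 2, (B u)ᴴ * B u := by
    rw [ESet_singleton_eq hn j (Aᴴ * A)]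
    congr 1
    refine Finset.sum_congr rfl fun u _ => ?_
    rw [Tc_mul, ← Tc_conjTranspose]
  have hD : ∑ u : Fin 2 × Fin 2, ∑ v : Fin 2 × Fin 2, (B u - B v)ᴴ * (B u - B v)
      = (8:ℂ) • ∑ u : Fin 2 × Fin 2, (B u)ᴴ * B u
        - (2:ℂ) • ((∑ u : Fin 2 × Fin 2, B u)ᴴ * ∑ u : Fin 2 × Fin 2, B u) := by
    have expand : ∀ u v : Fin 2 × Fin 2, (B u - B v)ᴴ * (B u - B v)
        = (B u)ᴴ * B u + (B v)ᴴ * B v - (B u)ᴴ * B v - (B v)ᴴ * B u := by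
      intro u v; rw [conjTranspose_sub]; noncomm_ring
    simp_rw [expand]
    simp only [Finset.sum_sub_distrib, Finset.sum_add_distrib, Finset.sum_const,
      Finset.card_univ, Fintype.card_prod, Fintype.card_fin, ← Matrix.sum_mul,
      ← Matrix.mul_sum, ← conjTranspose_sum]
    rw [← Finset.smul_sum]
    have hc : ∀ (k : ℕ) (M : Obs n), k • M = ((k:ℂ)) • M :=
      fun k M => (Nat.cast_smul_eq_nsmul ℂ k M).symm
    rw [hc]
    push_cast
    module
  have hstar4 : star ((4:ℂ)⁻¹) = (4:ℂ)⁻¹ := by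
    simp
  have key : ESet {j} (Aᴴ * A) - (ESet {j} A)ᴴ * ESet {j} A
      = (32:ℂ)⁻¹ • ∑ u : Fin 2 × Fin 2, ∑ v : Fin 2 × Fin 2, (B u - B v)ᴴ * (B u - B v) := by
    rw [hE, hE2, hD, conjTranspose_smul, hstar4, smul_mul_smul_comm]
    module
  rw [key]
  have h32 : (0:ℂ) ≤ (32:ℂ)⁻¹ := by
    rw [show (32:ℂ)⁻¹ = ((32⁻¹:ℝ):ℂ) by norm_num, Complex.zero_le_real]
    norm_num
  exact psd_smul
    (psd_sum _ _ fun u _ => psd_sum _ _ fun v _ => posSemidef_conjTranspose_mul_self _) h32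

lemma ESet_conjTranspose {n : ℕ} (S : Finset (Fin n)) (A : Obs n) :
    (ESet S A)ᴴ = ESet S Aᴴ := by
  ext x y
  simp only [ESet, conjTranspose_apply, Matrix.of_apply]
  by_cases h : ∀ k ∈ S, x k = y k
  · have h' : ∀ k ∈ S, y k = x k := fun k hk => (h k hk).symm
    rw [if_pos h', if_pos h, star_mul', star_sum]
    have hc : star (((2:ℂ)^n)⁻¹) = ((2:ℂ)^n)⁻¹ := by simp
    rw [hc]
  · have h' : ¬ ∀ k ∈ S, y k = x k := fun hc => h fun k hk => (hc k hk).symm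
    rw [if_neg h', if_neg h, star_zero]

lemma dCoord_conjTranspose {n : ℕ} (j : Fin n) (A : Obs n) :
    dCoord j Aᴴ = (dCoord j A)ᴴ := by
  simp only [dCoord, conjTranspose_sub, ESet_conjTranspose]

end Aux

end AuxLemmas

/-- For every `n ≥ 1`, `A ∈ M₂(ℂ)^{⊗n}` and each `j`,
`d_j(A)* A + A* d_j(A) − d_j(A* A) ≥ d_j(A)* d_j(A)` in the Loewner order; consequently
`2 Γ(A) ≥ ∑_j d_j(A)* d_j(A)`. -/
theorem claim_carre_lower_bound (n : ℕ) (hn : 1 ≤ n) (A : Obs n) :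
    (∀ j : Fin n,
      LoewnerLE ((dCoord j A)ᴴ * dCoord j A)
        ((dCoord j A)ᴴ * A + Aᴴ * dCoord j A - dCoord j (Aᴴ * A))) ∧
    LoewnerLE (∑ j : Fin n, (dCoord j A)ᴴ * dCoord j A) ((2 : ℂ) • carre A) := by
  have part1 : ∀ j : Fin n,
      LoewnerLE ((dCoord j A)ᴴ * dCoord j A)
        ((dCoord j A)ᴴ * A + Aᴴ * dCoord j A - dCoord j (Aᴴ * A)) := by
    intro j
    show (((dCoord j A)ᴴ * A + Aᴴ * dCoord j A - dCoord j (Aᴴ * A))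
        - (dCoord j A)ᴴ * dCoord j A).PosSemidef
    have heq : ((dCoord j A)ᴴ * A + Aᴴ * dCoord j A - dCoord j (Aᴴ * A))
          - (dCoord j A)ᴴ * dCoord j A
        = ESet {j} (Aᴴ * A) - (ESet {j} A)ᴴ * ESet {j} A := by
      simp only [dCoord, conjTranspose_sub]
      noncomm_ring
    rw [heq]
    exact Aux.kadison hn j A
  refine ⟨part1, ?_⟩
  show ((2:ℂ) • carre A - ∑ j : Fin n, (dCoord j A)ᴴ * dCoord j A).PosSemidef
  have h2 : (2:ℂ) • carre A
      = ∑ j : Fin n, ((dCoord j A)ᴴ * A + Aᴴ * dCoord j A - dCoord j (Aᴴ * A)) := by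
    unfold carre Lgen
    rw [smul_smul, show (2:ℂ) * 2⁻¹ = 1 by norm_num, one_smul]
    rw [Matrix.sum_mul, Matrix.mul_sum, ← Finset.sum_add_distrib, ← Finset.sum_sub_distrib]
    refine Finset.sum_congr rfl fun j _ => ?_
    rw [Aux.dCoord_conjTranspose]
  rw [h2, ← Finset.sum_sub_distrib]
  exact Aux.psd_sum _ _ fun j _ => part1 j


end QPaper
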